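/- Fix an integer k ≥ 1, an integer j ≥ 0 with j ≠ k, and α ∈ (−1/k, −1/(k+1)), and set p = p(n) = n^α (real power). Then lim_{n→∞} Var_{μ_{n,p}}[f_{n,j}] / Var_{μ_{n,p}}[f_{n,k}] = 0. -/

import Mathlib

open Finset MeasureTheory Filter Real

noncomputable section

open scoped Classical

/-- The edge set `E_n`: unordered pairs of distinct elements of `[n]`. -/
abbrev Edge (n : ℕ) := {e : Sym2 (Fin n) // ¬ e.IsDiag}

/-- An edge configuration on `[n]`. -/
abbrev Config (n : ℕ) := Edge n → Bool

/-- Bernoulli(p) weight of a state. -/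
def bern (p : ℝ) (b : Bool) : ℝ := if b then p else 1 - p

/-- Weight of a configuration under the static Erdős–Rényi measure `μ_{n,p}`. -/
def staticWeight (n : ℕ) (p : ℝ) (ω : Config n) : ℝ := ∏ e : Edge n, bern p (ω e)

/-- Expectation under the static Erdős–Rényi measure `μ_{n,p}`. -/
def staticExp (n : ℕ) (p : ℝ) (f : Config n → ℝ) : ℝ :=
  ∑ ω : Config n, staticWeight n p ω * f ω

/-- Variance under the static Erdős–Rényi measure `μ_{n,p}`. -/
def staticVar (n : ℕ) (p : ℝ) (f : Config n → ℝ) : ℝ :=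
  staticExp n p (fun ω => (f ω - staticExp n p f) ^ 2)

/-- `A` is a clique of the graph `G(ω)`: every pair of distinct elements of `A`
is an edge of `G(ω)`. -/
def IsCliqueOf {n : ℕ} (A : Finset (Fin n)) (ω : Config n) : Prop :=
  ∀ e : Edge n, e.1 ∈ A.sym2 → ω e = true

/-- The clique count `f_{n,j}(ω)`: the number of `(j+1)`-element subsets of `[n]`
all of whose pairs are edges of `G(ω)`. -/
def cliqueCount (n j : ℕ) (ω : Config n) : ℕ :=
  ((Finset.powersetCard (j + 1) (Finset.univ : Finset (Fin n))).filter
    (fun A => IsCliqueOf A ω)).card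

/-- Real-valued clique count. -/
def cliqueCountR (n j : ℕ) (ω : Config n) : ℝ := (cliqueCount n j ω : ℝ)

/-- The Euler characteristic `χ_n(ω) = Σ_{j=0}^{n-1} (-1)^j f_{n,j}(ω)`. -/
def eulerChar (n : ℕ) (ω : Config n) : ℝ :=
  ∑ j ∈ Finset.range n, (-1 : ℝ) ^ j * cliqueCountR n j ω

/-- Transition probability of the stationary on/off Markov chain with invariant
law Bernoulli(p) over a time increment `s`. -/
def transP (lam p s : ℝ) (b b' : Bool) : ℝ :=
  if b then (if b' then p + (1 - p) * Real.exp (-lam * s)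
             else (1 - p) * (1 - Real.exp (-lam * s)))
  else (if b' then p * (1 - Real.exp (-lam * s))
        else (1 - p) + p * Real.exp (-lam * s))

/-- Weight of a trajectory of the stationary on/off Markov chain observed at the
times `t 0 ≤ t 1 ≤ …`. -/
def pathWeight (lam p : ℝ) {m : ℕ} (t : Fin m → ℝ) (b : Fin m → Bool) : ℝ :=
  ∏ i : Fin m,
    if (i : ℕ) = 0 then bern p (b i)
    else transP lam p (t i - t ⟨(i : ℕ) - 1, lt_of_le_of_lt (Nat.sub_le _ _) i.isLt⟩)
      (b ⟨(i : ℕ) - 1, lt_of_le_of_lt (Nat.sub_le _ _) i.isLt⟩) (b i)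

/-- Weight of an `m`-tuple of edge configurations under the `m`-time dynamic
Erdős–Rényi measure `μ_{n,p}^{(t 0, …, t (m-1))}`. -/
def dynWeight (lam p : ℝ) (n : ℕ) {m : ℕ} (t : Fin m → ℝ) (ω : Fin m → Config n) : ℝ :=
  ∏ e : Edge n, pathWeight lam p t (fun i => ω i e)

/-- Expectation under the `m`-time dynamic Erdős–Rényi measure. -/
def dynExp (lam p : ℝ) (n : ℕ) {m : ℕ} (t : Fin m → ℝ) (F : (Fin m → Config n) → ℝ) : ℝ :=
  ∑ ω : Fin m → Config n, dynWeight lam p n t ω * F ω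

/-- The normalized clique count `f̄_{n,k}` (under the measure `μ_{n,p}`). -/
def fbar (n k : ℕ) (p : ℝ) (ω : Config n) : ℝ :=
  (cliqueCountR n k ω - staticExp n p (cliqueCountR n k)) /
    Real.sqrt (staticVar n p (cliqueCountR n k))

/-- The normalized Euler characteristic `χ̄_n` (under the measure `μ_{n,p}`). -/
def chibar (n : ℕ) (p : ℝ) (ω : Config n) : ℝ :=
  (eulerChar n ω - staticExp n p (eulerChar n)) /
    Real.sqrt (staticVar n p (eulerChar n))

/-- The clique indicator `1_A(ω)` as a real number. -/
def cliqueInd {n : ℕ} (A : Finset (Fin n)) (ω : Config n) : ℝ :=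
  if IsCliqueOf A ω then 1 else 0

/-- A quadruple of subsets has an independent set if one of them shares at most
one vertex with each of the others. -/
def HasIndepSet {n : ℕ} (A : Fin 4 → Finset (Fin n)) : Prop :=
  ∃ q : Fin 4, ∀ r : Fin 4, r ≠ q → ((A q) ∩ (A r)).card ≤ 1

/-- The quantity `g(h; Ā)` built from clique indicators at three times. -/
def gQuad {n : ℕ} (A : Fin 4 → Finset (Fin n)) (ω : Fin 3 → Config n) : ℝ :=
  (cliqueInd (A 0) (ω 2) - cliqueInd (A 0) (ω 1)) *
  (cliqueInd (A 1) (ω 2) - cliqueInd (A 1) (ω 1)) *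
  (cliqueInd (A 2) (ω 1) - cliqueInd (A 2) (ω 0)) *
  (cliqueInd (A 3) (ω 1) - cliqueInd (A 3) (ω 0))

/-- `ver(Ā)`: inclusion–exclusion count of vertices. -/
def verA {n : ℕ} (A : Fin 4 → Finset (Fin n)) : ℤ :=
  (∑ q : Fin 4, ((A q).card : ℤ))
  - (∑ q : Fin 4, ∑ r : Fin 4, if q < r then (((A q) ∩ (A r)).card : ℤ) else 0)
  + (∑ q : Fin 4, ∑ r : Fin 4, ∑ s : Fin 4,
      if q < r ∧ r < s then (((A q) ∩ (A r) ∩ (A s)).card : ℤ) else 0)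
  - ((A 0 ∩ A 1 ∩ A 2 ∩ A 3).card : ℤ)

/-- `pair(Ā)`: inclusion–exclusion count of potential edges. -/
def pairA {n : ℕ} (A : Fin 4 → Finset (Fin n)) : ℤ :=
  (∑ q : Fin 4, (Nat.choose (A q).card 2 : ℤ))
  - (∑ q : Fin 4, ∑ r : Fin 4, if q < r then (Nat.choose ((A q) ∩ (A r)).card 2 : ℤ) else 0)
  + (∑ q : Fin 4, ∑ r : Fin 4, ∑ s : Fin 4,
      if q < r ∧ r < s then (Nat.choose ((A q) ∩ (A r) ∩ (A s)).card 2 : ℤ) else 0)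
  - (Nat.choose (A 0 ∩ A 1 ∩ A 2 ∩ A 3).card 2 : ℤ)

/-!
Writing `f_{n,j}` as the sum of the indicators of the `(j+1)`-cliques, `Var f_{n,j}` is a sum of
covariances over ordered pairs of `(j+1)`-sets, and the covariance of a pair depends only on the
size `l` of its overlap: it is `p^(2·C(j+1,2) - C(l,2)) - p^(2·C(j+1,2))`, which vanishes for
`l < 2`. There are `Θ(n^(2(j+1)-l))` pairs with overlap `l`, so at `p = n^α` the class `l`
contributes `Θ(n^e)` with `e = 2(j+1) - l + α(j(j+1) - l(l-1)/2)`. This exponent is convex in `l`,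
so only `l = 2` and `l = j+1` matter, and for `-1/k < α < -1/(k+1)` both `e(2)` and `e(j+1)`,
viewed as functions of `j`, have a strict maximum at `j = k`. Hence every class of `Var f_{n,j}`
is negligible against the dominant class of `Var f_{n,k}`.
-/

variable {n : ℕ}

def edgesOf (A : Finset (Fin n)) : Finset (Edge n) := A.sym2.subtype (¬ ·.IsDiag)

lemma mem_edgesOf {A : Finset (Fin n)} {e : Edge n} : e ∈ edgesOf A ↔ e.1 ∈ A.sym2 :=
  Finset.mem_subtype

lemma card_edgesOf (A : Finset (Fin n)) : #(edgesOf A) = (#A).choose 2 := by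
  rw [edgesOf, card_subtype, Finset.sym2_eq_image, Sym2.filter_image_mk_not_isDiag,
    Sym2.card_image_offDiag]

lemma edgesOf_inter (A B : Finset (Fin n)) : edgesOf (A ∩ B) = edgesOf A ∩ edgesOf B := by
  ext e
  simp only [mem_edgesOf, mem_inter, mem_sym2_iff, forall_and]

lemma staticExp_prod (p : ℝ) (g : Edge n → Bool → ℝ) :
    staticExp n p (fun ω => ∏ e, g e (ω e)) = ∏ e, (p * g e true + (1 - p) * g e false) := by
  simp only [staticExp, staticWeight, ← prod_mul_distrib]
  rw [← Fintype.prod_sum (fun e b => bern p b * g e b)]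
  simp [bern]

lemma staticExp_sum {ι : Type*} (p : ℝ) (s : Finset ι) (X : ι → Config n → ℝ) :
    staticExp n p (fun ω => ∑ i ∈ s, X i ω) = ∑ i ∈ s, staticExp n p (X i) := by
  simp only [staticExp, mul_sum]
  exact sum_comm

lemma staticExp_one (p : ℝ) : staticExp n p (fun _ => 1) = 1 := by
  simpa using staticExp_prod (n := n) p (fun _ _ => 1)

lemma staticExp_ite_forall_mem (p : ℝ) (S : Finset (Edge n)) :
    staticExp n p (fun ω => if ∀ e ∈ S, ω e = true then 1 else 0) = p ^ #S := by
  convert staticExp_prod (n := n) p (fun e b => if e ∈ S then (if b then 1 else 0) else 1) using 1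
  · simp [prod_boole]
  · rw [← prod_const, ← Fintype.prod_ite_mem]
    exact prod_congr rfl fun e _ => by by_cases he : e ∈ S <;> simp [he]

lemma cliqueInd_eq_ite (A : Finset (Fin n)) (ω : Config n) :
    cliqueInd A ω = if ∀ e ∈ edgesOf A, ω e = true then 1 else 0 := by
  rw [cliqueInd]
  exact if_congr (by simp only [IsCliqueOf, mem_edgesOf]) rfl rfl

lemma staticExp_cliqueInd (p : ℝ) (A : Finset (Fin n)) :
    staticExp n p (cliqueInd A) = p ^ (#A).choose 2 := by
  rw [show cliqueInd A = _ from funext (cliqueInd_eq_ite A), staticExp_ite_forall_mem, card_edgesOf]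

lemma staticExp_cliqueInd_mul (p : ℝ) (A B : Finset (Fin n)) :
    staticExp n p (fun ω => cliqueInd A ω * cliqueInd B ω) = p ^ #(edgesOf A ∪ edgesOf B) := by
  have h (ω : Config n) : cliqueInd A ω * cliqueInd B ω =
      if ∀ e ∈ edgesOf A ∪ edgesOf B, ω e = true then 1 else 0 := by
    rw [cliqueInd_eq_ite, cliqueInd_eq_ite, ite_zero_mul_ite_zero, mul_one]
    exact if_congr forall_mem_union.symm rfl rfl
  simp only [h, staticExp_ite_forall_mem]

lemma staticVar_eq_sub (p : ℝ) (X : Config n → ℝ) :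
    staticVar n p X = staticExp n p (fun ω => X ω ^ 2) - staticExp n p X ^ 2 := by
  have hw : ∑ ω, staticWeight n p ω = 1 := by simpa [staticExp] using staticExp_one (n := n) p
  unfold staticVar
  generalize hE : staticExp n p X = E
  rw [staticExp] at hE
  simp only [staticExp]
  calc ∑ ω, staticWeight n p ω * (X ω - E) ^ 2
      = ∑ ω, staticWeight n p ω * X ω ^ 2 - 2 * E * ∑ ω, staticWeight n p ω * X ω
          + E ^ 2 * ∑ ω, staticWeight n p ω := by
        simp only [mul_sum, ← sum_sub_distrib, ← sum_add_distrib]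
        exact sum_congr rfl fun _ _ => by ring
    _ = _ := by rw [hw, hE]; ring

lemma staticVar_sum {ι : Type*} (p : ℝ) (s : Finset ι) (X : ι → Config n → ℝ) :
    staticVar n p (fun ω => ∑ i ∈ s, X i ω) =
      ∑ i ∈ s, ∑ i' ∈ s, (staticExp n p (fun ω => X i ω * X i' ω) -
        staticExp n p (X i) * staticExp n p (X i')) := by
  simp only [staticVar_eq_sub, sq, sum_mul_sum, staticExp_sum, sum_sub_distrib]

lemma card_filter_card_inter_eq {α : Type*} [Fintype α] [DecidableEq α] (A : Finset α)
    {m l : ℕ} (hl : l ≤ m) :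
    #{B ∈ powersetCard m univ | #(A ∩ B) = l} =
      (#A).choose l * (Fintype.card α - #A).choose (m - l) := by
  rw [← card_powersetCard, ← card_compl, ← card_powersetCard, ← card_product]
  refine card_nbij' (fun B => (A ∩ B, B \ A)) (fun q => q.1 ∪ q.2) ?_ ?_ ?_ ?_
  · intro B hB
    simp only [coe_filter, mem_powersetCard_univ, Set.mem_ofPred_eq] at hB
    simp only [coe_product, Set.mem_prod, mem_coe, mem_powersetCard]
    refine ⟨⟨inter_subset_left, hB.2⟩, fun x hx => by simp_all, ?_⟩
    have := card_sdiff_add_card_inter B A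
    rw [inter_comm] at this
    omega
  · rintro ⟨C, D⟩ hq
    simp only [coe_product, Set.mem_prod, mem_coe, mem_powersetCard] at hq
    obtain ⟨⟨hCA, hC⟩, hDA, hD⟩ := hq
    have hdisj : Disjoint C D :=
      disjoint_of_subset_left hCA (disjoint_of_subset_right hDA disjoint_compl_right)
    have hAD : A ∩ (C ∪ D) = C := by grind [mem_compl]
    simp [hAD, card_union_of_disjoint hdisj, hC, hD, hl]
  · intro B _
    dsimp only
    rw [union_comm, inter_comm, sdiff_union_inter]
  · rintro ⟨C, D⟩ hq
    simp only [coe_product, Set.mem_prod, mem_coe, mem_powersetCard] at hq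
    exact Prod.ext (by grind [mem_compl]) (by grind [mem_compl])

def overlapCount (N m l : ℕ) : ℕ := N.choose m * (m.choose l * (N - m).choose (m - l))

lemma sum_sum_powersetCard_card_inter {α M : Type*} [Fintype α] [DecidableEq α]
    [AddCommMonoid M] (m : ℕ) (g : ℕ → M) :
    ∑ A ∈ powersetCard m (univ : Finset α), ∑ B ∈ powersetCard m univ, g #(A ∩ B) =
      ∑ l ∈ range (m + 1), overlapCount (Fintype.card α) m l • g l := by
  have inner : ∀ A ∈ powersetCard m (univ : Finset α),
      ∑ B ∈ powersetCard m univ, g #(A ∩ B) =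
        ∑ l ∈ range (m + 1), (m.choose l * (Fintype.card α - m).choose (m - l)) • g l := by
    intro A hA
    rw [mem_powersetCard_univ] at hA
    have hmaps : ∀ B ∈ powersetCard m (univ : Finset α), #(A ∩ B) ∈ range (m + 1) :=
      fun B _ => mem_range_succ_iff.2 (hA ▸ card_le_card inter_subset_left)
    rw [← sum_fiberwise_of_maps_to hmaps]
    refine sum_congr rfl fun l hl => ?_
    rw [sum_congr rfl fun B hB => congrArg g (mem_filter.1 hB).2, sum_const,
      card_filter_card_inter_eq A (mem_range_succ_iff.1 hl), hA]
  rw [sum_congr rfl inner, sum_const, card_powersetCard, card_univ, smul_sum]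
  simp only [overlapCount, mul_smul]

def overlapCov (p : ℝ) (m l : ℕ) : ℝ :=
  p ^ (2 * m.choose 2 - l.choose 2) - p ^ (2 * m.choose 2)

lemma staticExp_cliqueInd_mul_sub (p : ℝ) {m : ℕ} {A B : Finset (Fin n)} (hA : #A = m)
    (hB : #B = m) :
    staticExp n p (fun ω => cliqueInd A ω * cliqueInd B ω) -
      staticExp n p (cliqueInd A) * staticExp n p (cliqueInd B) = overlapCov p m #(A ∩ B) := by
  have hunion := card_union_add_card_inter (edgesOf A) (edgesOf B)
  rw [← edgesOf_inter, card_edgesOf, card_edgesOf, card_edgesOf, hA, hB] at hunion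
  rw [staticExp_cliqueInd_mul, staticExp_cliqueInd, staticExp_cliqueInd, hA, hB, ← pow_add,
    overlapCov, two_mul]
  congr 2
  omega

lemma cliqueCountR_eq_sum (j : ℕ) (ω : Config n) :
    cliqueCountR n j ω = ∑ A ∈ powersetCard (j + 1) univ, cliqueInd A ω := by
  rw [cliqueCountR, cliqueCount, card_filter]
  push_cast
  rfl

lemma staticVar_cliqueCountR (p : ℝ) (j : ℕ) :
    staticVar n p (cliqueCountR n j) =
      ∑ l ∈ range (j + 2), overlapCount n (j + 1) l * overlapCov p (j + 1) l := by
  rw [show cliqueCountR n j = _ from funext (cliqueCountR_eq_sum j), staticVar_sum]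
  rw [sum_congr rfl fun A hA => sum_congr rfl fun B hB =>
    staticExp_cliqueInd_mul_sub p (mem_powersetCard_univ.1 hA) (mem_powersetCard_univ.1 hB)]
  simp only [sum_sum_powersetCard_card_inter, Fintype.card_fin, nsmul_eq_mul]

lemma overlapCov_of_lt_two (p : ℝ) (m : ℕ) {l : ℕ} (hl : l < 2) : overlapCov p m l = 0 := by
  rw [overlapCov, Nat.choose_eq_zero_of_lt hl, Nat.sub_zero, sub_self]

lemma overlapCov_nonneg {p : ℝ} (hp₀ : 0 ≤ p) (hp₁ : p ≤ 1) (m l : ℕ) :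
    0 ≤ overlapCov p m l :=
  sub_nonneg.2 (pow_le_pow_of_le_one hp₀ hp₁ (Nat.sub_le _ _))

lemma overlapCount_mul_overlapCov_le_staticVar {p : ℝ} (hp₀ : 0 ≤ p) (hp₁ : p ≤ 1)
    {j l : ℕ} (hl : l ≤ j + 1) :
    overlapCount n (j + 1) l * overlapCov p (j + 1) l ≤ staticVar n p (cliqueCountR n j) := by
  rw [staticVar_cliqueCountR]
  exact single_le_sum (f := fun l => overlapCount n (j + 1) l * overlapCov p (j + 1) l)
    (fun l _ => mul_nonneg (Nat.cast_nonneg _) (overlapCov_nonneg hp₀ hp₁ _ _))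
    (mem_range.2 (by omega))

open Asymptotics Topology

lemma isTheta_natCast_sub (c : ℕ) :
    (fun N : ℕ => ((N - c : ℕ) : ℝ)) =Θ[atTop] (fun N => (N : ℝ)) := by
  refine IsEquivalent.isTheta ?_
  refine ((isLittleO_const_id_atTop (-(c : ℝ))).comp_tendsto tendsto_natCast_atTop_atTop).congr'
    ?_ EventuallyEq.rfl
  filter_upwards [eventually_ge_atTop c] with N hN
  simp [Nat.cast_sub hN]

lemma isTheta_choose_sub (c m : ℕ) :
    (fun N : ℕ => ((N - c).choose m : ℝ)) =Θ[atTop] (fun N => (N : ℝ) ^ m) :=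
  have h := tendsto_sub_atTop_nat c
  IsTheta.trans ⟨(isTheta_choose m).1.comp_tendsto h, (isTheta_choose m).2.comp_tendsto h⟩
    ((isTheta_natCast_sub c).pow m)

lemma isTheta_overlapCount {m l : ℕ} (hl : l ≤ m) :
    (fun N : ℕ => (overlapCount N m l : ℝ)) =Θ[atTop] (fun N => (N : ℝ) ^ (2 * m - l)) := by
  have hc : (m.choose l : ℝ) ≠ 0 := Nat.cast_ne_zero.2 (Nat.choose_pos hl).ne'
  have h := (isTheta_choose m).mul ((isTheta_const_mul_left hc).2 (isTheta_choose_sub m (m - l)))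
  simp only [overlapCount, Nat.cast_mul]
  refine h.trans_eventuallyEq (Eventually.of_forall fun N => ?_)
  dsimp only
  rw [← pow_add]
  congr 1
  omega

lemma isEquivalent_pow_sub_pow_add {ι : Type*} {F : Filter ι} {f : ι → ℝ}
    (hf : Tendsto f F (𝓝 0)) (a : ℕ) {c : ℕ} (hc : c ≠ 0) :
    (fun x => f x ^ a - f x ^ (a + c)) ~[F] (fun x => f x ^ a) := by
  have hfc : (fun x => f x ^ c) =o[F] (fun _ => (1 : ℝ)) :=
    (isLittleO_one_iff ℝ).2 (by simpa [zero_pow hc] using hf.pow c)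
  have hsmall := (hfc.mul_isBigO (isBigO_refl (fun x => f x ^ a) F)).neg_left
  simp only [one_mul] at hsmall
  refine hsmall.congr_left fun x => ?_
  simp [pow_add, mul_comm]

lemma isTheta_overlapCov {ι : Type*} {F : Filter ι} {f : ι → ℝ} (hf : Tendsto f F (𝓝 0))
    {m l : ℕ} (hl : 2 ≤ l) (hlm : l ≤ m) :
    (fun x => overlapCov (f x) m l) =Θ[F] (fun x => f x ^ (2 * m.choose 2 - l.choose 2)) := by
  have hchoose : l.choose 2 ≤ 2 * m.choose 2 := (Nat.choose_le_choose 2 hlm).trans (by omega)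
  have hpos : l.choose 2 ≠ 0 := (Nat.choose_pos hl).ne'
  have h := (isEquivalent_pow_sub_pow_add hf (2 * m.choose 2 - l.choose 2) hpos).isTheta
  simpa only [overlapCov, Nat.sub_add_cancel hchoose] using h

lemma isLittleO_natCast_rpow_rpow {a b : ℝ} (hab : a < b) :
    (fun n : ℕ => (n : ℝ) ^ a) =o[atTop] (fun n => (n : ℝ) ^ b) := by
  have h : (fun n : ℕ => (n : ℝ) ^ (a - b)) =o[atTop] (fun _ => (1 : ℝ)) :=
    (isLittleO_one_iff ℝ).2 <| by
      simpa [Function.comp_def] using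
        (tendsto_rpow_neg_atTop (sub_pos.2 hab)).comp tendsto_natCast_atTop_atTop
  refine ((h.mul_isBigO (isBigO_refl (fun n : ℕ => (n : ℝ) ^ b) atTop)).congr' ?_ ?_)
  · filter_upwards [eventually_gt_atTop 0] with n hn
    rw [← Real.rpow_add (Nat.cast_pos.2 hn), sub_add_cancel]
  · simp

def cliqueVarExponent (α j x : ℝ) : ℝ := 2 * (j + 1) - x + α * (j * (j + 1) - x * (x - 1) / 2)

lemma cliqueVarExponent_eq (α : ℝ) {j l : ℕ} (hl : l ≤ j + 1) :
    ((2 * (j + 1) - l : ℕ) : ℝ) + α * ((2 * (j + 1).choose 2 - l.choose 2 : ℕ) : ℝ) =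
      cliqueVarExponent α j l := by
  have hchoose : l.choose 2 ≤ 2 * (j + 1).choose 2 :=
    (Nat.choose_le_choose 2 hl).trans (by omega)
  rw [Nat.cast_sub (by omega), Nat.cast_sub hchoose, Nat.cast_mul, Nat.cast_mul,
    Nat.cast_choose_two, Nat.cast_choose_two, cliqueVarExponent]
  push_cast
  ring

lemma isTheta_overlapCount_mul_overlapCov {α : ℝ} (hα : α < 0) {j l : ℕ} (hl : 2 ≤ l)
    (hlj : l ≤ j + 1) :
    (fun n : ℕ => overlapCount n (j + 1) l * overlapCov ((n : ℝ) ^ α) (j + 1) l) =Θ[atTop]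
      (fun n => (n : ℝ) ^ cliqueVarExponent α j l) := by
  have hp : Tendsto (fun n : ℕ => (n : ℝ) ^ α) atTop (𝓝 0) := by
    simpa [Function.comp_def] using
      (tendsto_rpow_neg_atTop (neg_pos.2 hα)).comp tendsto_natCast_atTop_atTop
  refine ((isTheta_overlapCount hlj).mul (isTheta_overlapCov hp hl hlj)).trans_eventuallyEq ?_
  filter_upwards [eventually_gt_atTop 0] with n hn
  have hn' : (0 : ℝ) < n := Nat.cast_pos.2 hn
  rw [← cliqueVarExponent_eq α hlj, Real.rpow_add hn', Real.rpow_natCast,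
    Real.rpow_mul_natCast hn'.le]

lemma cliqueVarExponent_le_max {α : ℝ} (hα : α ≤ 0) {j x : ℝ} (hx : 2 ≤ x)
    (hxj : x ≤ j + 1) :
    cliqueVarExponent α j x ≤
      max (cliqueVarExponent α j 2) (cliqueVarExponent α j (j + 1)) := by
  -- convexity in `x`: the graph lies below the chord between `x = 2` and `x = j + 1`
  have key : (j - 1) * cliqueVarExponent α j x = (j + 1 - x) * cliqueVarExponent α j 2 +
      (x - 2) * cliqueVarExponent α j (j + 1) + (j - 1) * (α / 2) * (x - 2) * (j + 1 - x) := by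
    unfold cliqueVarExponent
    ring
  rcases eq_or_lt_of_le (hx.trans hxj) with hj | hj
  · rw [show x = 2 by linarith]
    exact le_max_left _ _
  have h1 := le_max_left (cliqueVarExponent α j 2) (cliqueVarExponent α j (j + 1))
  have h2 := le_max_right (cliqueVarExponent α j 2) (cliqueVarExponent α j (j + 1))
  have h3 : (j - 1) * (α / 2) * (x - 2) * (j + 1 - x) ≤ 0 :=
    mul_nonpos_of_nonpos_of_nonneg (mul_nonpos_of_nonpos_of_nonneg
      (mul_nonpos_of_nonneg_of_nonpos (by linarith) (by linarith)) (by linarith)) (by linarith)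
  nlinarith [mul_le_mul_of_nonneg_left h1 (by linarith : 0 ≤ j + 1 - x),
    mul_le_mul_of_nonneg_left h2 (by linarith : 0 ≤ x - 2)]

lemma sub_mul_two_add_pos {α : ℝ} {j k : ℕ} (hk : -1 < α * k) (hk₁ : α * (k + 1) < -1)
    (hjk : j ≠ k) : 0 < ((k : ℝ) - j) * (2 + α * (k + j + 1)) := by
  have hα : α < 0 := by linarith
  rcases lt_or_gt_of_ne hjk with h | h
  · have h' : (j : ℝ) + 1 ≤ k := by exact_mod_cast h
    exact mul_pos (by linarith) (by nlinarith)
  · have h' : (k : ℝ) + 1 ≤ j := by exact_mod_cast h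
    exact mul_pos_of_neg_of_neg (by linarith) (by nlinarith)

lemma cliqueVarExponent_lt_max {α : ℝ} {j k l : ℕ} (hk : -1 < α * k)
    (hk₁ : α * (k + 1) < -1) (hjk : j ≠ k) (hl : 2 ≤ l) (hlj : l ≤ j + 1) :
    cliqueVarExponent α j l < max (cliqueVarExponent α k 2) (cliqueVarExponent α k (k + 1)) := by
  -- with `e = cliqueVarExponent α`, this product is `e k 2 - e j 2 = 2 (e k (k+1) - e j (j+1))`
  have hpos := sub_mul_two_add_pos hk hk₁ hjk
  have htwo : cliqueVarExponent α j 2 < cliqueVarExponent α k 2 := by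
    unfold cliqueVarExponent; linear_combination hpos
  have hdiag : cliqueVarExponent α j (j + 1) < cliqueVarExponent α k (k + 1) := by
    unfold cliqueVarExponent; linear_combination hpos / 2
  calc cliqueVarExponent α j l
      ≤ max (cliqueVarExponent α j 2) (cliqueVarExponent α j (j + 1)) :=
        cliqueVarExponent_le_max (by linarith) (by exact_mod_cast hl) (by exact_mod_cast hlj)
    _ < _ := max_lt_max htwo hdiag

lemma isLittleO_staticVar_cliqueCountR {α : ℝ} {j k : ℕ} (hk : -1 < α * k)
    (hk₁ : α * (k + 1) < -1) (hjk : j ≠ k) :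
    (fun n : ℕ => staticVar n ((n : ℝ) ^ α) (cliqueCountR n j)) =o[atTop]
      (fun n => (n : ℝ) ^ max (cliqueVarExponent α k 2) (cliqueVarExponent α k (k + 1))) := by
  simp only [staticVar_cliqueCountR]
  refine IsLittleO.fun_sum fun l hl => ?_
  rw [mem_range_succ_iff] at hl
  rcases lt_or_ge l 2 with hl₂ | hl₂
  · simp [overlapCov_of_lt_two _ _ hl₂]
  · exact (isTheta_overlapCount_mul_overlapCov (by linarith) hl₂ hl).trans_isLittleO
      (isLittleO_natCast_rpow_rpow (cliqueVarExponent_lt_max hk hk₁ hjk hl₂ hl))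

lemma isBigO_rpow_cliqueVarExponent_staticVar {α : ℝ} (hα : α < 0) {k l : ℕ} (hl : 2 ≤ l)
    (hlk : l ≤ k + 1) :
    (fun n : ℕ => (n : ℝ) ^ cliqueVarExponent α k l) =O[atTop]
      (fun n : ℕ => staticVar n ((n : ℝ) ^ α) (cliqueCountR n k)) := by
  refine (isTheta_overlapCount_mul_overlapCov hα hl hlk).symm.trans_isBigO (IsBigO.of_bound' ?_)
  filter_upwards [eventually_ge_atTop 1] with n hn
  have hp₀ : 0 ≤ (n : ℝ) ^ α := Real.rpow_nonneg (Nat.cast_nonneg n) α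
  have hp₁ : (n : ℝ) ^ α ≤ 1 :=
    Real.rpow_le_one_of_one_le_of_nonpos (by exact_mod_cast hn) hα.le
  have hterm := mul_nonneg (Nat.cast_nonneg (overlapCount n (k + 1) l))
    (overlapCov_nonneg hp₀ hp₁ (k + 1) l)
  have hle := overlapCount_mul_overlapCov_le_staticVar (n := n) hp₀ hp₁ hlk
  rwa [Real.norm_of_nonneg hterm, Real.norm_of_nonneg (hterm.trans hle)]

/-- For `j ≠ k`, `Var[f_{n,j}] / Var[f_{n,k}] → 0` as `n → ∞`
when `p = n^α` with `α ∈ (-1/k, -1/(k+1))`. -/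
theorem variance_ratio_cliqueCounts_tendsto_zero (k : ℕ) (hk : 1 ≤ k)
    (j : ℕ) (hjk : j ≠ k) (α : ℝ)
    (hα : α ∈ Set.Ioo (-(1 / (k : ℝ))) (-(1 / ((k : ℝ) + 1)))) :
    Filter.Tendsto
      (fun n : ℕ =>
        staticVar n ((n : ℝ) ^ α) (cliqueCountR n j) /
          staticVar n ((n : ℝ) ^ α) (cliqueCountR n k))
      Filter.atTop (nhds 0) := by
  obtain ⟨hlo, hhi⟩ := hα
  have hαk : -1 < α * k := (div_lt_iff₀ (by exact_mod_cast hk)).1 (by rwa [neg_div])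
  have hαk₁ : α * (k + 1) < -1 := (lt_div_iff₀ (by positivity)).1 (by rwa [neg_div])
  have hα₀ : α < 0 := by linarith
  refine ((isLittleO_staticVar_cliqueCountR hαk hαk₁ hjk).trans_isBigO ?_).tendsto_div_nhds_zero
  rcases le_total (cliqueVarExponent α k 2) (cliqueVarExponent α k (k + 1)) with h | h
  · rw [max_eq_right h]
    simpa using isBigO_rpow_cliqueVarExponent_staticVar hα₀ (l := k + 1) (by omega) le_rfl
  · rw [max_eq_left h]
    simpa using isBigO_rpow_cliqueVarExponent_staticVar hα₀ (l := 2) le_rfl (by omega)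

end
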